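/- arXiv:2405.07396 — 2 statements merged into one kernel-verified Lean document; each statement's English description precedes it below -/
import Mathlib

section
/- Let C ∈ ℝ^{N₂×N₁} be a matrix, and define the leap-frog scheme b^{n+1/2} = b^{n−1/2} − Δt·C·eⁿ together with [⋆_ε]·e^{n+1} = [⋆_ε]·eⁿ + Δt·Cᵀ·[⋆_{μ⁻¹}]·b^{n+1/2} (no current), where [⋆_ε] and [⋆_{μ⁻¹}] are symmetric positive definite. Then the discrete energy Eⁿ = (1/2)(eⁿ)ᵀ[⋆_ε]eⁿ + (1/2)(b^{n−1/2})ᵀ[⋆_{μ⁻¹}]b^{n+1/2} is conserved: E^{n+1} = Eⁿ for all n. -/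
open Matrix

lemma dot_tr {m n : ℕ} (C : Matrix (Fin m) (Fin n) ℝ) (x : Fin n → ℝ)
    (w : Fin m → ℝ) : x ⬝ᵥ Cᵀ.mulVec w = C.mulVec x ⬝ᵥ w := by
  rw [Matrix.dotProduct_mulVec, Matrix.vecMul_transpose]

lemma symm_dot {n : ℕ} {M : Matrix (Fin n) (Fin n) ℝ} (hM : Mᵀ = M)
    (x y : Fin n → ℝ) : x ⬝ᵥ M.mulVec y = y ⬝ᵥ M.mulVec x := by
  rw [Matrix.dotProduct_mulVec, ← Matrix.mulVec_transpose, hM,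
    dotProduct_comm]

/-- Discrete energy conservation for the source-free mixed finite-element
leap-frog scheme.  Here `b n` stands for `b^{n−1/2}`, so `b (n+1) = b^{n+1/2}`. -/
theorem stmt_12 {N₁ N₂ : ℕ} (C : Matrix (Fin N₂) (Fin N₁) ℝ)
    (Mε : Matrix (Fin N₁) (Fin N₁) ℝ) (Mμ : Matrix (Fin N₂) (Fin N₂) ℝ)
    (hε : Mε.PosDef) (hμ : Mμ.PosDef) (Δt : ℝ) (hΔt : 0 < Δt)
    (e : ℕ → Fin N₁ → ℝ) (b : ℕ → Fin N₂ → ℝ)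
    (hb : ∀ n, b (n+1) = b n - Δt • C.mulVec (e n))
    (he : ∀ n, Mε.mulVec (e (n+1))
        = Mε.mulVec (e n) + Δt • Cᵀ.mulVec (Mμ.mulVec (b (n+1)))) :
    let En : ℕ → ℝ := fun n =>
      (1/2) * (e n ⬝ᵥ Mε.mulVec (e n)) + (1/2) * (b n ⬝ᵥ Mμ.mulVec (b (n+1)))
    ∀ n, En (n+1) = En n := by
  intro En n
  have hεs : Mεᵀ = Mε := by simpa using hε.isHermitian.eq
  have hμs : Mμᵀ = Mμ := by simpa using hμ.isHermitian.eq
  set X0 : ℝ := C.mulVec (e n) ⬝ᵥ Mμ.mulVec (b (n+1)) with hX0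
  set X1 : ℝ := C.mulVec (e (n+1)) ⬝ᵥ Mμ.mulVec (b (n+1)) with hX1
  -- electric part
  have h1 : e (n+1) ⬝ᵥ Mε.mulVec (e (n+1))
      = e (n+1) ⬝ᵥ Mε.mulVec (e n) + Δt * X1 := by
    rw [he n, dotProduct_add, dotProduct_smul, smul_eq_mul, hX1, dot_tr]
  have h2 : e n ⬝ᵥ Mε.mulVec (e (n+1))
      = e n ⬝ᵥ Mε.mulVec (e n) + Δt * X0 := by
    rw [he n, dotProduct_add, dotProduct_smul, smul_eq_mul, hX0, dot_tr]
  have hsw : e n ⬝ᵥ Mε.mulVec (e (n+1)) = e (n+1) ⬝ᵥ Mε.mulVec (e n) :=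
    symm_dot hεs _ _
  -- magnetic part
  have h3 : b (n+1) ⬝ᵥ Mμ.mulVec (b (n+2))
      = b (n+1) ⬝ᵥ Mμ.mulVec (b (n+1)) - Δt * X1 := by
    rw [hb (n+1), Matrix.mulVec_sub, dotProduct_sub, Matrix.mulVec_smul,
      dotProduct_smul, smul_eq_mul, symm_dot hμs (b (n+1)) (C.mulVec (e (n+1)))]
  have h4 : b n ⬝ᵥ Mμ.mulVec (b (n+1))
      = b (n+1) ⬝ᵥ Mμ.mulVec (b (n+1)) + Δt * X0 := by
    have : b n = b (n+1) + Δt • C.mulVec (e n) := by rw [hb n]; abel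
    rw [this, add_dotProduct, smul_dotProduct, smul_eq_mul]
  show (1/2) * (e (n+1) ⬝ᵥ Mε.mulVec (e (n+1)))
      + (1/2) * (b (n+1) ⬝ᵥ Mμ.mulVec (b (n+2)))
    = (1/2) * (e n ⬝ᵥ Mε.mulVec (e n)) + (1/2) * (b n ⬝ᵥ Mμ.mulVec (b (n+1)))
  rw [h1, h3, h4, ← hsw, h2]
  ring
end

section
/- Suppose the exact current projection j_i = (Q/Δt)∫_{r⁰}^{r¹} W⁽¹⁾_i · dl is used for a particle moving along a straight segment from r⁰ to r¹ inside a single triangle, where W⁽¹⁾_i are the three Whitney edge functions of that triangle. Then the discrete continuity equation holds: Δt·Σ_edges (divergence incidence applied to j) equals the change in the Whitney-0-form (barycentric) charge assignment, i.e., for each vertex k of the triangle, Q·(λ_k(r¹) − λ_k(r⁰)) = Δt·Σ_i D_{ki} j_i, where λ_k are barycentric coordinates and D is the node-edge incidence matrix. -/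
/-- Charge conservation of the Whitney edge-element current scatter on a single
triangle: barycentric coordinates `lam k p = a k ⋅ p + c k` with `∑ a = 0`,
`∑ c = 1`; Whitney 1-forms `W_{ab} = λ_a ∇λ_b − λ_b ∇λ_a` on the edges
(0,1), (1,2), (2,0); node-edge incidence `D`.  For the exact current projection
along a straight segment from `r0` to `r1` inside the closed triangle,
`Q (λ_k(r1) − λ_k(r0)) = Δt ∑_i D_{ki} j_i`. -/
theorem stmt_19 (a : Fin 3 → ℝ × ℝ) (c : Fin 3 → ℝ)
    (hsa : ∑ k, a k = 0) (hsc : ∑ k, c k = 1)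
    (lam : Fin 3 → ℝ × ℝ → ℝ)
    (hlam : ∀ k p, lam k p = (a k).1 * p.1 + (a k).2 * p.2 + c k)
    (edge : Fin 3 → Fin 3 × Fin 3)
    (hedge : edge 0 = (0, 1) ∧ edge 1 = (1, 2) ∧ edge 2 = (2, 0))
    (W : Fin 3 → ℝ × ℝ → ℝ × ℝ)
    (hW : ∀ i p, W i p = lam (edge i).1 p • a (edge i).2
                        - lam (edge i).2 p • a (edge i).1)
    (D : Fin 3 → Fin 3 → ℝ)
    (hD : ∀ k i, D k i = (if k = (edge i).2 then 1 else 0)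
                        - (if k = (edge i).1 then 1 else 0))
    (Q Δt : ℝ) (hΔt : Δt ≠ 0)
    (r0 r1 : ℝ × ℝ)
    (h0 : ∀ k, 0 ≤ lam k r0) (h1 : ∀ k, 0 ≤ lam k r1)
    (j : Fin 3 → ℝ)
    (hj : ∀ i, j i = (Q / Δt) *
        ∫ t in (0:ℝ)..1,
          ((W i (r0 + t • (r1 - r0))).1 * (r1 - r0).1 +
           (W i (r0 + t • (r1 - r0))).2 * (r1 - r0).2)) :
    ∀ k, Q * (lam k r1 - lam k r0) = Δt * ∑ i, D k i * j i := by
  have hu : ∀ (m : Fin 3) (t : ℝ), lam m (r0 + t • (r1 - r0)) =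
      lam m r0 + t * ((a m).1 * (r1 - r0).1 + (a m).2 * (r1 - r0).2) := by
    intro m t
    simp [hlam, Prod.fst_add, Prod.snd_add, Prod.smul_fst, Prod.smul_snd,
      Prod.fst_sub, Prod.snd_sub, smul_eq_mul]
    ring
  have hint : ∀ (i : Fin 3) (t : ℝ),
      (W i (r0 + t • (r1 - r0))).1 * (r1 - r0).1 +
      (W i (r0 + t • (r1 - r0))).2 * (r1 - r0).2 =
      lam (edge i).1 r0 * ((a (edge i).2).1 * (r1 - r0).1 + (a (edge i).2).2 * (r1 - r0).2)
      - lam (edge i).2 r0 * ((a (edge i).1).1 * (r1 - r0).1 + (a (edge i).1).2 * (r1 - r0).2) := by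
    intro i t
    rw [hW]
    simp [Prod.fst_sub, Prod.snd_sub, Prod.smul_fst, Prod.smul_snd, smul_eq_mul, hu]
    ring
  have hjv : ∀ i, j i = (Q / Δt) *
      (lam (edge i).1 r0 * ((a (edge i).2).1 * (r1 - r0).1 + (a (edge i).2).2 * (r1 - r0).2)
      - lam (edge i).2 r0 * ((a (edge i).1).1 * (r1 - r0).1 + (a (edge i).1).2 * (r1 - r0).2)) := by
    intro i
    rw [hj]
    congr 1
    simp only [hint]
    simp
  obtain ⟨he0, he1, he2⟩ := hedge
  have ha : a 0 + a 1 + a 2 = 0 := by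
    have := hsa; rwa [Fin.sum_univ_three] at this
  have ha1 : (a 0).1 + (a 1).1 + (a 2).1 = 0 := by
    have := congrArg Prod.fst ha; simpa using this
  have ha2 : (a 0).2 + (a 1).2 + (a 2).2 = 0 := by
    have := congrArg Prod.snd ha; simpa using this
  have hc : c 0 + c 1 + c 2 = 1 := by
    have := hsc; rwa [Fin.sum_univ_three] at this
  have e1 : (a 2).1 = -((a 0).1 + (a 1).1) := by linarith
  have e2 : (a 2).2 = -((a 0).2 + (a 1).2) := by linarith
  have ec : c 2 = 1 - (c 0 + c 1) := by linarith
  intro k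
  fin_cases k
  · simp only [Fin.sum_univ_three, hjv, hD, he0, he1, he2, hlam]
    norm_num [Fin.ext_iff]
    rw [e1, e2, ec]
    field_simp
    ring
  · simp only [Fin.sum_univ_three, hjv, hD, he0, he1, he2, hlam]
    norm_num [Fin.ext_iff]
    rw [e1, e2, ec]
    field_simp
    ring
  · show Q * (lam 2 r1 - lam 2 r0) = Δt * ∑ i, D 2 i * j i
    simp only [Fin.sum_univ_three, hjv, hD, he0, he1, he2, hlam]
    norm_num [Fin.ext_iff]
    rw [e1, e2, ec]
    field_simp
    ring
end
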